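/- Let χ: ℙ₁ × ℙ₂ → ℙ' be a linear map satisfying conditions (i) and (ii), with A ∈ 𝒫₁ as in condition (ii) and basis 𝓑 as in condition (i), let γ be a regular embedding, and let φ: ℙ̄ → ℙ' be a linear map extending (γ⁻¹χ) restricted to (𝒫₁ × 𝓑)γ. Then ({A} × 𝒫₂)γφ = ({A} × 𝒫₂)χ; moreover, for every X ∈ 𝒫₂ there is exactly one point Y ∈ 𝒫₂ such that (A, Y)χ = (A, X)γφ, and the map α': 𝒫₂ → 𝒫₂ defined by Xα' := Y is a collineation of ℙ₂. -/

import Mathlib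

open Set

namespace Segre

variable {P Q : Type*}

/-- Two points are collinear w.r.t. a line set `L` if some line contains both. -/
def Collin (L : Set (Set P)) (x y : P) : Prop := ∃ g ∈ L, x ∈ g ∧ y ∈ g

/-- The union of all lines of `L` through both `x` and `y`; for distinct collinear
points of a semilinear space this is the unique line `xy`. -/
def lineThru (L : Set (Set P)) (x y : P) : Set P := ⋃ g ∈ {g ∈ L | x ∈ g ∧ y ∈ g}, g

/-- The join `M₁ ∨ M₂` of two point sets in a (semi)linear space with line set `L`. -/
def sJoin (L : Set (Set P)) (M₁ M₂ : Set P) : Set P :=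
  M₁ ∪ M₂ ∪
    ⋃ (x ∈ M₁) (y ∈ M₂) (_ : x ≠ y ∧ Collin L x y), lineThru L x y

/-- The (possibly empty) image point set `Xχ` of a single point under a partial map. -/
def ptImg (χ : P → Option Q) (X : P) : Set Q := {y | χ X = some y}

/-- The image `Mχ` of a point set under a partial map. -/
def mapSet (χ : P → Option Q) (M : Set P) : Set Q := ⋃ X ∈ M, ptImg χ X

/-- Axioms (L1) and (L2) for a linear map from the semilinear space with point set `P`
and line set `L` into the projective space with point set `Q` and line set `L'`.
Points in the exceptional set are modelled by the value `none`. -/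
def IsLinMap (L : Set (Set P)) (L' : Set (Set Q)) (χ : P → Option Q) : Prop :=
  (∀ X Y : P, Collin L X Y →
      mapSet χ (sJoin L {X} {Y}) = sJoin L' (ptImg χ X) (ptImg χ Y)) ∧
  (∀ X Y : P, Collin L X Y → X ≠ Y → ptImg χ X = ptImg χ Y →
      ∃ Z ∈ lineThru L X Y, χ Z = none)

/-- A linear map is global if its domain is everything. -/
def IsGlobal (χ : P → Option Q) : Prop := ∀ X, χ X ≠ none

/-- The lines of the product of two semilinear spaces with line sets `L₁`, `L₂`. -/
def prodLines (L₁ : Set (Set P)) (L₂ : Set (Set Q)) : Set (Set (P × Q)) :=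
  {s | (∃ X₁ : P, ∃ g₂ ∈ L₂, s = {X₁} ×ˢ g₂) ∨ ∃ g₁ ∈ L₁, ∃ X₂ : Q, s = g₁ ×ˢ {X₂}}

/-- The lines of the product of two lines `ℓ₁`, `ℓ₂` (viewed as semilinear spaces). -/
def lineProdLines (ℓ₁ : Set P) (ℓ₂ : Set Q) : Set (Set (P × Q)) :=
  {s | (∃ X ∈ ℓ₁, s = {X} ×ˢ ℓ₂) ∨ ∃ Y ∈ ℓ₂, s = ℓ₁ ×ˢ {Y}}

/-- A collineation of a projective (or semilinear) space with line set `L`: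
a bijection such that it and its inverse map lines onto lines. -/
def IsCollineation (L : Set (Set P)) (α : P → P) : Prop :=
  Function.Bijective α ∧ ∀ g : Set P, g ∈ L ↔ α '' g ∈ L

section Projective

variable {K V : Type*} [Field K] [AddCommGroup V] [Module K V]

/-- The point set of the projective line through two (distinct) points of a
projective space `ℙ K V`. -/
def projLineThrough (x y : Projectivization K V) : Set (Projectivization K V) :=
  {z | z.submodule ≤ x.submodule ⊔ y.submodule}

/-- The lines of the projective space `ℙ K V`. -/
def projLines (K V : Type*) [Field K] [AddCommGroup V] [Module K V] :
    Set (Set (Projectivization K V)) :=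
  {g | ∃ x y : Projectivization K V, x ≠ y ∧ g = projLineThrough x y}

/-- The linear span of (representatives of) a set of projective points; its projective
space is the projective closure of the set, whose projective dimension is the vector
rank of this span minus one. -/
def spanOf (M : Set (Projectivization K V)) : Submodule K V := ⨆ x ∈ M, x.submodule

/-- `E` is the point set of a plane (projective dimension 2). -/
def IsPlane (E : Set (Projectivization K V)) : Prop :=
  ∃ W : Submodule K V, Module.finrank K ↥W = 3 ∧ E = {x | x.submodule ≤ W}

/-- The family of points `A` is a projective basis of the subspace of `ℙ K V`
corresponding to the submodule `W`: the representatives are linearly independent and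
span `W`. -/
def IsProjBasisOf {ι : Type*} (A : ι → Projectivization K V) (W : Submodule K V) : Prop :=
  iSupIndep (fun i => (A i).submodule) ∧ (⨆ i, (A i).submodule) = W

end Projective

section PG

variable (F : Type*) [Field F]

/-- The point set of `PG(k, F)`. -/
abbrev PGPt (k : ℕ) := Projectivization F (Fin (k + 1) → F)

/-- The line set of `PG(k, F)`. -/
abbrev PGLines (k : ℕ) := projLines F (Fin (k + 1) → F)

variable (n m : ℕ)

/-- A regular embedding `γ : ℙ₁ × ℙ₂ → ℙ̄`, where `ℙ₁ = PG(n,F)`, `ℙ₂ = PG(m,F)` and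
`ℙ̄ = PG(nm+n+m, F)`: a global injective linear map of the product such that the
projective closure of the image has (projective) dimension `nm+n+m`. -/
def IsRegularEmbedding (γ : PGPt F n × PGPt F m → PGPt F (n * m + n + m)) : Prop :=
  IsLinMap (prodLines (PGLines F n) (PGLines F m)) (PGLines F (n * m + n + m))
      (fun p => some (γ p)) ∧
  Function.Injective γ ∧
  Module.finrank F ↥(spanOf (Set.range γ)) = n * m + n + m + 1

variable {K W : Type*} [Field K] [AddCommGroup W] [Module K W]

/-- Condition (i) on `χ`, w.r.t. the basis `B` of `ℙ₂` and the plane `E ⊆ 𝒫₁`: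
for every `i = 1, …, m` the restriction of `χ` to `E × {B 0, B i}` is global and
of rank greater than `2` (i.e. the vector rank of the span of its image exceeds `3`). -/
def CondI (χ : PGPt F n × PGPt F m → Option (Projectivization K W))
    (B : Fin (m + 1) → PGPt F m) (E : Set (PGPt F n)) : Prop :=
  IsProjBasisOf B (⊤ : Submodule F (Fin (m + 1) → F)) ∧ IsPlane E ∧
  ∀ i : Fin (m + 1), i ≠ 0 →
    (∀ p ∈ E ×ˢ ({B 0, B i} : Set (PGPt F m)), χ p ≠ none) ∧
    3 < Module.rank K ↥(spanOf (mapSet χ (E ×ˢ ({B 0, B i} : Set (PGPt F m)))))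

/-- Condition (ii) on `χ`, w.r.t. the point `A ∈ 𝒫₁`: the image `({A} × 𝒫₂)χ` has
projective dimension `m` (i.e. the vector rank of the span of the image is `m + 1`). -/
def CondII (χ : PGPt F n × PGPt F m → Option (Projectivization K W))
    (A : PGPt F n) : Prop :=
  Module.rank K ↥(spanOf (mapSet χ (({A} : Set (PGPt F n)) ×ˢ (univ : Set (PGPt F m)))))
    = (m : Cardinal) + 1

/-- `ℓ₂` is a special line for the data `χ, γ, φ, α'`: it is a line of `ℙ₂` such that
(a) `({X} × ℓ₂)γφ = ({X} × ℓ₂)αχ` for every `X ∈ 𝒫₁`, and (b) the rank of `αχ`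
restricted to `𝒫₁ × ℓ₂` is greater than `1` (vector rank of the span `> 2`). -/
def SpecialLine (χ : PGPt F n × PGPt F m → Option (Projectivization K W))
    (γ : PGPt F n × PGPt F m → PGPt F (n * m + n + m))
    (φ : PGPt F (n * m + n + m) → Option (Projectivization K W))
    (α' : PGPt F m → PGPt F m) (ℓ₂ : Set (PGPt F m)) : Prop :=
  ℓ₂ ∈ PGLines F m ∧
  (∀ X : PGPt F n,
    mapSet (fun p => φ (γ p)) (({X} : Set (PGPt F n)) ×ˢ ℓ₂) =
      mapSet (fun p : PGPt F n × PGPt F m => χ (p.1, α' p.2))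
        (({X} : Set (PGPt F n)) ×ˢ ℓ₂)) ∧
  2 < Module.rank K ↥(spanOf (mapSet (fun p : PGPt F n × PGPt F m => χ (p.1, α' p.2))
        ((univ : Set (PGPt F n)) ×ˢ ℓ₂)))

end PG

end Segre

/-!
Restricted to the slice `{A} × ℙ₂`, both `χ` and `γφ` become linear maps `σ, τ` of `ℙ₂` that
agree on the basis `𝓑`. The image of a linear map spans the same subspace as the images of any
spanning set of points (the points whose image lies in that span form a projective subspace),
so `σ` and `τ` have the same image span, of dimension `m` by (ii). A linear map of `PG(m, F)`
with an exceptional point has an image span of smaller dimension, so `σ` and `τ` are global,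
hence injective by (L2). The image of a global linear map is closed under joining lines, so it
consists of all points of its span. Hence `σ` and `τ` are bijections onto the same point set,
both mapping lines onto lines, and `α' = σ⁻¹ ∘ τ` is a collineation.
-/

namespace Segre

open Projectivization
open scoped LinearAlgebra.Projectivization

section Semilinear

variable {P Q R : Type*}

lemma mem_lineThru_left {L : Set (Set P)} {x y : P} (h : Collin L x y) : x ∈ lineThru L x y := by
  obtain ⟨g, hg, hx, hy⟩ := h
  exact mem_biUnion ⟨hg, hx, hy⟩ hx

lemma mem_lineThru_right {L : Set (Set P)} {x y : P} (h : Collin L x y) : y ∈ lineThru L x y := by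
  obtain ⟨g, hg, hx, hy⟩ := h
  exact mem_biUnion ⟨hg, hx, hy⟩ hy

lemma sJoin_singleton_eq_lineThru {L : Set (Set P)} {x y : P} (hxy : x ≠ y) (h : Collin L x y) :
    sJoin L {x} {y} = lineThru L x y := by
  refine Subset.antisymm ?_ fun z hz => Or.inr ?_
  · rintro z ((rfl | rfl) | hz)
    · exact mem_lineThru_left h
    · exact mem_lineThru_right h
    · simp only [mem_iUnion, mem_singleton_iff, exists_prop] at hz
      obtain ⟨_, rfl, _, rfl, -, hz⟩ := hz
      exact hz
  · simp only [mem_iUnion, mem_singleton_iff, exists_prop]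
    exact ⟨x, rfl, y, rfl, ⟨hxy, h⟩, hz⟩

lemma Collin.prod_left {L₁ : Set (Set P)} {L₂ : Set (Set Q)} {X Y : Q} (h : Collin L₂ X Y)
    (A : P) : Collin (prodLines L₁ L₂) (A, X) (A, Y) := by
  obtain ⟨g, hg, hX, hY⟩ := h
  exact ⟨{A} ×ˢ g, Or.inl ⟨A, g, hg, rfl⟩, ⟨rfl, hX⟩, ⟨rfl, hY⟩⟩

lemma lineThru_prodLines_left (L₁ : Set (Set P)) (L₂ : Set (Set Q)) (A : P) {X Y : Q}
    (hXY : X ≠ Y) :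
    lineThru (prodLines L₁ L₂) (A, X) (A, Y) = {A} ×ˢ lineThru L₂ X Y := by
  ext ⟨a, z⟩
  simp only [lineThru, mem_iUnion, mem_sep_iff, exists_prop, mem_prod, mem_singleton_iff]
  constructor
  · rintro ⟨g, ⟨⟨X₁, g₂, hg₂, rfl⟩ | ⟨g₁, -, X₂, rfl⟩, hX, hY⟩, hz⟩
    · simp only [mem_prod, mem_singleton_iff] at hX hY hz
      exact ⟨hz.1.trans hX.1.symm, g₂, ⟨hg₂, hX.2, hY.2⟩, hz.2⟩
    · simp only [mem_prod, mem_singleton_iff] at hX hY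
      exact absurd (hX.2.trans hY.2.symm) hXY
  · rintro ⟨rfl, g, ⟨hg, hX, hY⟩, hz⟩
    exact ⟨{a} ×ˢ g, ⟨Or.inl ⟨a, g, hg, rfl⟩, ⟨rfl, hX⟩, ⟨rfl, hY⟩⟩, ⟨rfl, hz⟩⟩

lemma mem_mapSet {σ : P → Option Q} {M : Set P} {q : Q} :
    q ∈ mapSet σ M ↔ ∃ X ∈ M, σ X = some q := by
  simp [mapSet, ptImg]

lemma ptImg_of_eq_some {σ : P → Option Q} {X : P} {q : Q} (h : σ X = some q) :
    ptImg σ X = {q} := by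
  ext r
  simp [ptImg, h, eq_comm]

lemma ptImg_eq_ptImg_iff {σ : P → Option R} {τ : Q → Option R} {X : P} {Y : Q} :
    ptImg σ X = ptImg τ Y ↔ σ X = τ Y := by
  refine ⟨fun h => ?_, fun h => by simp only [ptImg, h]⟩
  cases hX : σ X <;> cases hY : τ Y <;> simp_all [ptImg, Set.ext_iff]

lemma mapSet_mono (σ : P → Option Q) {M N : Set P} (h : M ⊆ N) : mapSet σ M ⊆ mapSet σ N :=
  biUnion_subset_biUnion_left h

lemma mapSet_congr {σ τ : P → Option Q} {M : Set P} (h : EqOn σ τ M) :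
    mapSet σ M = mapSet τ M := by
  ext q
  simp only [mem_mapSet]
  exact exists_congr fun X => and_congr_right fun hX => by rw [h hX]

lemma mapSet_comp (φ : Q → Option R) (g : P → Q) (M : Set P) :
    mapSet (fun X => φ (g X)) M = mapSet φ (g '' M) := by
  ext q
  simp [mem_mapSet]

lemma mapSet_some (g : P → Q) (M : Set P) : mapSet (fun X => some (g X)) M = g '' M := by
  ext q
  simp [mem_mapSet]

lemma mapSet_singleton_prod (χ : P × Q → Option R) (A : P) (M : Set Q) :
    mapSet χ ({A} ×ˢ M) = mapSet (fun z => χ (A, z)) M := by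
  ext q
  simp [mem_mapSet]

lemma mapSet_sdiff_singleton_of_eq_none {σ : P → Option Q} {X : P} (h : σ X = none)
    (M : Set P) : mapSet σ (M \ {X}) = mapSet σ M := by
  refine (mapSet_mono σ sdiff_subset).antisymm fun q hq => ?_
  obtain ⟨Y, hY, hYq⟩ := mem_mapSet.1 hq
  have hYX : Y ≠ X := by rintro rfl; simp [h] at hYq
  exact mem_mapSet.2 ⟨Y, ⟨hY, hYX⟩, hYq⟩

lemma finite_mapSet (σ : P → Option Q) {M : Set P} (hM : M.Finite) : (mapSet σ M).Finite :=
  hM.biUnion fun _ _ =>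
    Subsingleton.finite fun _ ha _ hb => Option.some_injective _ (ha.symm.trans hb)

lemma ncard_mapSet_le (σ : P → Option Q) {M : Set P} (hM : M.Finite) :
    (mapSet σ M).ncard ≤ M.ncard :=
  calc (mapSet σ M).ncard = (some '' mapSet σ M).ncard :=
        (ncard_image_of_injective _ (Option.some_injective Q)).symm
    _ ≤ (σ '' M).ncard := by
        refine ncard_le_ncard ?_ (hM.image σ)
        rintro _ ⟨q, hq, rfl⟩
        obtain ⟨X, hX, hXq⟩ := mem_mapSet.1 hq
        exact ⟨X, hX, hXq⟩
    _ ≤ M.ncard := ncard_image_le hM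

lemma mem_of_mem_mapSet {σ : P → Option Q} (hσ : Function.Injective σ) {M : Set P} {X : P}
    {q : Q} (hX : σ X = some q) (hq : q ∈ mapSet σ M) : X ∈ M := by
  obtain ⟨Y, hY, hYq⟩ := mem_mapSet.1 hq
  rwa [hσ (hYq.trans hX.symm)] at hY

lemma mapSet_injective {σ : P → Option Q} (hglob : IsGlobal σ) (hσ : Function.Injective σ) :
    Function.Injective (mapSet σ) := by
  intro M N h
  ext X
  obtain ⟨q, hq⟩ := Option.ne_none_iff_exists'.1 (hglob X)
  exact ⟨fun hX => mem_of_mem_mapSet hσ hq (h ▸ mem_mapSet.2 ⟨X, hX, hq⟩),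
    fun hX => mem_of_mem_mapSet hσ hq (h.symm ▸ mem_mapSet.2 ⟨X, hX, hq⟩)⟩

lemma existsUnique_eq_of_mapSet_univ_eq {σ τ : P → Option Q} (hσ : Function.Injective σ)
    (hτ : IsGlobal τ) (him : mapSet τ univ = mapSet σ univ) (X : P) : ∃! Y, σ Y = τ X := by
  obtain ⟨q, hq⟩ := Option.ne_none_iff_exists'.1 (hτ X)
  obtain ⟨Y, -, hY⟩ := mem_mapSet.1 (him ▸ mem_mapSet.2 ⟨X, mem_univ X, hq⟩)
  exact ⟨Y, hY.trans hq.symm, fun Y' hY' => hσ (hY'.trans (hq.trans hY.symm))⟩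

end Semilinear

section Projective

variable {K V : Type*} [Field K] [AddCommGroup V] [Module K V]

lemma mem_projLineThrough_left (x y : ℙ K V) : x ∈ projLineThrough x y :=
  show x.submodule ≤ _ from le_sup_left

lemma mem_projLineThrough_right (x y : ℙ K V) : y ∈ projLineThrough x y :=
  show y.submodule ≤ _ from le_sup_right

lemma collin_projLines {x y : ℙ K V} (h : x ≠ y) : Collin (projLines K V) x y :=
  ⟨projLineThrough x y, ⟨x, y, h, rfl⟩, mem_projLineThrough_left x y,
    mem_projLineThrough_right x y⟩

lemma eq_of_submodule_le {x y : ℙ K V} (h : x.submodule ≤ y.submodule) : x = y := by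
  refine submodule_injective (Submodule.eq_of_le_of_finrank_le h ?_)
  rw [finrank_submodule, finrank_submodule]

lemma projLineThrough_self (x : ℙ K V) : projLineThrough x x = {x} := by
  ext z
  simp only [projLineThrough, sup_idem, mem_ofPred_eq, mem_singleton_iff]
  exact ⟨eq_of_submodule_le, fun h => h ▸ le_rfl⟩

lemma mk_add_mem_projLineThrough {v w : V} (hv : v ≠ 0) (hw : w ≠ 0) (hvw : v + w ≠ 0) :
    mk K (v + w) hvw ∈ projLineThrough (mk K v hv) (mk K w hw) := by
  simp only [projLineThrough, mem_ofPred_eq, submodule_mk, Submodule.span_singleton_le_iff_mem]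
  exact Submodule.add_mem_sup (Submodule.mem_span_singleton_self v)
    (Submodule.mem_span_singleton_self w)

lemma finrank_sup_submodule {x y : ℙ K V} (h : x ≠ y) :
    Module.finrank K ↥(x.submodule ⊔ y.submodule) = 2 := by
  have hspan : x.submodule ⊔ y.submodule = Submodule.span K (range ![x.rep, y.rep]) := by
    rw [Matrix.range_cons, Matrix.range_cons, Matrix.range_empty, union_empty,
      singleton_union, Submodule.span_insert, submodule_eq, submodule_eq]
  rw [hspan, finrank_span_eq_card (linearIndependent_pair_iff_ne.2 h), Fintype.card_fin]

lemma eq_projLineThrough_of_mem {g : Set (ℙ K V)} (hg : g ∈ projLines K V) {x y : ℙ K V}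
    (hx : x ∈ g) (hy : y ∈ g) (hxy : x ≠ y) : g = projLineThrough x y := by
  obtain ⟨a, b, hab, rfl⟩ := hg
  have : x.submodule ⊔ y.submodule = a.submodule ⊔ b.submodule :=
    Submodule.eq_of_le_of_finrank_le (sup_le hx hy)
      (by rw [finrank_sup_submodule hab, finrank_sup_submodule hxy])
  simp only [projLineThrough, this]

lemma lineThru_projLines {x y : ℙ K V} (hxy : x ≠ y) :
    lineThru (projLines K V) x y = projLineThrough x y := by
  refine Subset.antisymm ?_ fun z hz => ?_
  · simp only [lineThru, iUnion_subset_iff, mem_sep_iff]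
    rintro g ⟨hg, hx, hy⟩
    exact (eq_projLineThrough_of_mem hg hx hy hxy).subset
  · exact mem_biUnion ⟨⟨x, y, hxy, rfl⟩, mem_projLineThrough_left x y,
      mem_projLineThrough_right x y⟩ hz

lemma sJoin_projLines_singleton {x y : ℙ K V} (hxy : x ≠ y) :
    sJoin (projLines K V) {x} {y} = projLineThrough x y := by
  rw [sJoin_singleton_eq_lineThru hxy (collin_projLines hxy), lineThru_projLines hxy]

lemma submodule_le_spanOf {M : Set (ℙ K V)} {x : ℙ K V} (h : x ∈ M) :
    x.submodule ≤ spanOf M :=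
  le_biSup _ h

lemma spanOf_le {M : Set (ℙ K V)} {U : Submodule K V} (h : ∀ x ∈ M, x.submodule ≤ U) :
    spanOf M ≤ U :=
  iSup₂_le h

lemma spanOf_mono {M N : Set (ℙ K V)} (h : M ⊆ N) : spanOf M ≤ spanOf N :=
  spanOf_le fun _ hx => submodule_le_spanOf (h hx)

lemma sJoin_projLines_subset (M₁ M₂ : Set (ℙ K V)) :
    sJoin (projLines K V) M₁ M₂ ⊆ {r | r.submodule ≤ spanOf M₁ ⊔ spanOf M₂} := by
  rintro r ((h | h) | h)
  · exact (submodule_le_spanOf h).trans le_sup_left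
  · exact (submodule_le_spanOf h).trans le_sup_right
  · simp only [mem_iUnion, exists_prop] at h
    obtain ⟨x, hx, y, hy, ⟨hxy, -⟩, hr⟩ := h
    rw [lineThru_projLines hxy] at hr
    exact hr.trans (sup_le_sup (submodule_le_spanOf hx) (submodule_le_spanOf hy))

lemma rank_spanOf_le_ncard {M : Set (ℙ K V)} (hM : M.Finite) :
    Module.rank K (spanOf M) ≤ M.ncard := by
  have hspan : spanOf M = Submodule.span K (Projectivization.rep '' M) := by
    refine le_antisymm (spanOf_le fun x hx => ?_) (Submodule.span_le.2 ?_)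
    · rw [submodule_eq, Submodule.span_singleton_le_iff_mem]
      exact Submodule.subset_span (mem_image_of_mem _ hx)
    · rintro _ ⟨x, hx, rfl⟩
      exact submodule_le_spanOf hx (by rw [submodule_eq]; exact Submodule.mem_span_singleton_self _)
  have : Finite ↥(Projectivization.rep '' M) := hM.image Projectivization.rep
  calc Module.rank K (spanOf M) ≤ Cardinal.mk ↥(Projectivization.rep '' M) := hspan ▸ rank_span_le _
    _ = (Projectivization.rep '' M).ncard := by rw [← Nat.card_coe_set_eq, Nat.cast_card]
    _ ≤ M.ncard := by exact_mod_cast ncard_image_le hM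

/-- Such a set is a `Projectivization.Subspace`, i.e. the set of points of a submodule. -/
lemma mem_of_submodule_le_spanOf {S : Set (ℙ K V)}
    (hS : ∀ x ∈ S, ∀ y ∈ S, x ≠ y → projLineThrough x y ⊆ S) {q : ℙ K V}
    (hq : q.submodule ≤ spanOf S) : q ∈ S := by
  let T : Projectivization.Subspace K V :=
    { carrier := S
      mem_add' := fun v w hv hw hvw hvS hwS => by
        have hmem := mk_add_mem_projLineThrough (K := K) hv hw hvw
        by_cases h : mk K v hv = mk K w hw
        · rw [h, projLineThrough_self, mem_singleton_iff] at hmem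
          exact hmem ▸ hwS
        · exact hS _ hvS _ hwS h hmem }
  have hT : ∀ x : ℙ K V, x ∈ S ↔ x.submodule ≤ Subspace.submodule T := fun x => by
    rw [← Submodule.mem_projectivization_iff_submodule_le, OrderIso.symm_apply_apply]
    rfl
  exact (hT q).2 (hq.trans (spanOf_le fun x hx => (hT x).1 hx))

lemma exists_spanning_set_through [FiniteDimensional K V] (x₀ : ℙ K V) :
    ∃ S : Set (ℙ K V), x₀ ∈ S ∧ S.Finite ∧ S.ncard ≤ Module.finrank K V ∧ spanOf S = ⊤ := by
  have li : LinearIndepOn K id {x₀.rep} := (linearIndepOn_singleton_iff K).2 x₀.rep_nonzero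
  let b := Module.Basis.extend li
  let P := fun i => mk K (b i) (b.ne_zero i)
  refine ⟨range P, ⟨⟨x₀.rep, li.subset_extend _ rfl⟩, ?_⟩, finite_range P, ?_, ?_⟩
  · simp only [P, b, Module.Basis.extend_apply_self, mk_rep]
  · rw [Module.finrank_eq_nat_card_basis b, ← ncard_univ, ← image_univ]
    exact ncard_image_le
  · simp only [spanOf, iSup_range, P, submodule_mk, ← Submodule.span_range_eq_iSup, b.span_eq]

end Projective

section LinearMaps

variable {F V K W : Type*} [Field F] [AddCommGroup V] [Module F V]
  [Field K] [AddCommGroup W] [Module K W]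

/-- Axioms (L1) and (L2) of a linear map between projective spaces, for distinct points. -/
structure IsProjLinMap (σ : ℙ F V → Option (ℙ K W)) : Prop where
  mapSet_line : ∀ ⦃X Y⦄, X ≠ Y →
    mapSet σ (projLineThrough X Y) = sJoin (projLines K W) (ptImg σ X) (ptImg σ Y)
  exists_eq_none : ∀ ⦃X Y⦄, X ≠ Y → ptImg σ X = ptImg σ Y →
    ∃ Z ∈ projLineThrough X Y, σ Z = none

lemma IsLinMap.isProjLinMap {σ : ℙ F V → Option (ℙ K W)}
    (h : IsLinMap (projLines F V) (projLines K W) σ) : IsProjLinMap σ where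
  mapSet_line X Y hXY := by
    rw [← sJoin_projLines_singleton hXY]
    exact h.1 X Y (collin_projLines hXY)
  exists_eq_none X Y hXY hpt := by
    simpa only [lineThru_projLines hXY] using h.2 X Y (collin_projLines hXY) hXY hpt

lemma IsLinMap.isProjLinMap_slice {P : Type*} {L : Set (Set P)}
    {χ : P × ℙ F V → Option (ℙ K W)}
    (hχ : IsLinMap (prodLines L (projLines F V)) (projLines K W) χ) (A : P) :
    IsProjLinMap fun z => χ (A, z) where
  mapSet_line X Y hXY := by
    have hc := (collin_projLines hXY).prod_left (L₁ := L) A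
    have hne : (A, X) ≠ (A, Y) := by simpa using hXY
    have h := hχ.1 _ _ hc
    rwa [sJoin_singleton_eq_lineThru hne hc, lineThru_prodLines_left _ _ _ hXY,
      lineThru_projLines hXY, mapSet_singleton_prod] at h
  exists_eq_none X Y hXY hpt := by
    have hc := (collin_projLines hXY).prod_left (L₁ := L) A
    obtain ⟨⟨A', Z⟩, hZ, hZnone⟩ := hχ.2 _ _ hc (by simpa using hXY) hpt
    rw [lineThru_prodLines_left _ _ _ hXY, lineThru_projLines hXY] at hZ
    obtain ⟨rfl : A' = A, hZ⟩ := hZ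
    exact ⟨Z, hZ, hZnone⟩

namespace IsProjLinMap

variable {σ τ : ℙ F V → Option (ℙ K W)}

lemma injective (hσ : IsProjLinMap σ) (hglob : IsGlobal σ) : Function.Injective σ := by
  intro X Y hXY
  by_contra hne
  obtain ⟨Z, -, hZ⟩ := hσ.exists_eq_none hne (ptImg_eq_ptImg_iff.2 hXY)
  exact hglob Z hZ

lemma mapSet_projLineThrough (hσ : IsProjLinMap σ) (hinj : Function.Injective σ)
    {X Y : ℙ F V} (hXY : X ≠ Y) {p q : ℙ K W} (hX : σ X = some p) (hY : σ Y = some q) :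
    mapSet σ (projLineThrough X Y) = projLineThrough p q := by
  have hpq : p ≠ q := by
    rintro rfl
    exact hXY (hinj (hX.trans hY.symm))
  rw [hσ.mapSet_line hXY, ptImg_of_eq_some hX, ptImg_of_eq_some hY, sJoin_projLines_singleton hpq]

lemma injective_of_some {g : ℙ F V → ℙ K W} (hg : IsProjLinMap fun X => some (g X)) :
    Function.Injective g :=
  fun _ _ h => hg.injective (fun _ => Option.some_ne_none _) (congrArg some h)

lemma image_projLineThrough {g : ℙ F V → ℙ K W} (hg : IsProjLinMap fun X => some (g X))
    {X Y : ℙ F V} (hXY : X ≠ Y) : g '' projLineThrough X Y = projLineThrough (g X) (g Y) := by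
  rw [← mapSet_some]
  exact hg.mapSet_projLineThrough (hg.injective fun _ => Option.some_ne_none _) hXY rfl rfl

lemma comp {U : Type*} [AddCommGroup U] [Module F U] {φ : ℙ F U → Option (ℙ K W)}
    {g : ℙ F V → ℙ F U} (hφ : IsProjLinMap φ) (hg : IsProjLinMap fun X => some (g X)) :
    IsProjLinMap fun X => φ (g X) where
  mapSet_line X Y hXY := by
    rw [mapSet_comp, hg.image_projLineThrough hXY]
    exact hφ.mapSet_line (hg.injective_of_some.ne hXY)
  exists_eq_none X Y hXY hpt := by
    obtain ⟨Z, hZ, hZnone⟩ := hφ.exists_eq_none (hg.injective_of_some.ne hXY) hpt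
    rw [← hg.image_projLineThrough hXY] at hZ
    obtain ⟨Z, hZ, rfl⟩ := hZ
    exact ⟨Z, hZ, hZnone⟩

/-- The points whose image lies in `spanOf (mapSet σ S)` form a line-closed set containing
the spanning set `S`, hence everything. -/
lemma spanOf_mapSet_univ (hσ : IsProjLinMap σ) {S : Set (ℙ F V)} (hS : spanOf S = ⊤) :
    spanOf (mapSet σ univ) = spanOf (mapSet σ S) := by
  set U := spanOf (mapSet σ S)
  set T := {Z | ∀ r, σ Z = some r → r.submodule ≤ U}
  have hT : ∀ X ∈ T, ∀ Y ∈ T, X ≠ Y → projLineThrough X Y ⊆ T := by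
    intro X hX Y hY hXY Z hZ r hr
    have hsub : spanOf (ptImg σ X) ⊔ spanOf (ptImg σ Y) ≤ U :=
      sup_le (spanOf_le hX) (spanOf_le hY)
    have hmem : r ∈ mapSet σ (projLineThrough X Y) := mem_mapSet.2 ⟨Z, hZ, hr⟩
    rw [hσ.mapSet_line hXY] at hmem
    exact (sJoin_projLines_subset _ _ hmem).trans hsub
  have hST : S ⊆ T := fun X hX r hr => submodule_le_spanOf (mem_mapSet.2 ⟨X, hX, hr⟩)
  refine le_antisymm (spanOf_le fun q hq => ?_) (spanOf_mono (mapSet_mono σ (subset_univ S)))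
  obtain ⟨X, -, hX⟩ := mem_mapSet.1 hq
  refine mem_of_submodule_le_spanOf hT ?_ q hX
  exact le_top.trans (hS ▸ spanOf_mono hST)

lemma rank_lt_of_eq_none [FiniteDimensional F V] (hσ : IsProjLinMap σ) {X₀ : ℙ F V}
    (h0 : σ X₀ = none) : Module.rank K (spanOf (mapSet σ univ)) < Module.finrank F V := by
  obtain ⟨S, hX₀, hfin, hcard, hS⟩ := exists_spanning_set_through X₀
  calc Module.rank K (spanOf (mapSet σ univ))
      = Module.rank K (spanOf (mapSet σ (S \ {X₀}))) := by
        rw [hσ.spanOf_mapSet_univ hS, mapSet_sdiff_singleton_of_eq_none h0]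
    _ ≤ (mapSet σ (S \ {X₀})).ncard :=
        rank_spanOf_le_ncard (finite_mapSet σ hfin.sdiff)
    _ ≤ (S \ {X₀}).ncard := by exact_mod_cast ncard_mapSet_le σ hfin.sdiff
    _ < Module.finrank F V := by
        exact_mod_cast (ncard_sdiff_singleton_lt_of_mem hX₀ hfin).trans_le hcard

lemma isGlobal_of_rank_eq [FiniteDimensional F V] (hσ : IsProjLinMap σ)
    (h : Module.rank K (spanOf (mapSet σ univ)) = Module.finrank F V) : IsGlobal σ :=
  fun _ hX => (hσ.rank_lt_of_eq_none hX).ne h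

lemma mapSet_univ_eq_of_isGlobal (hσ : IsProjLinMap σ) (hglob : IsGlobal σ) :
    mapSet σ univ = {q | q.submodule ≤ spanOf (mapSet σ univ)} := by
  refine Subset.antisymm (fun q hq => submodule_le_spanOf hq) fun q hq => ?_
  refine mem_of_submodule_le_spanOf ?_ hq
  intro p hp q hq hpq
  obtain ⟨X, -, hX⟩ := mem_mapSet.1 hp
  obtain ⟨Y, -, hY⟩ := mem_mapSet.1 hq
  have hXY : X ≠ Y := by
    rintro rfl
    exact hpq (Option.some_injective _ (hX.symm.trans hY))
  rw [← hσ.mapSet_projLineThrough (hσ.injective hglob) hXY hX hY]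
  exact mapSet_mono σ (subset_univ _)

lemma image_mem_projLines_of_comp_eq (hσ : IsProjLinMap σ) (hτ : IsProjLinMap τ)
    (hσg : IsGlobal σ) (hτg : IsGlobal τ) {α : ℙ F V → ℙ F V} (hα : ∀ X, σ (α X) = τ X)
    {g : Set (ℙ F V)} (hg : g ∈ projLines F V) : α '' g ∈ projLines F V := by
  obtain ⟨X, Y, hXY, rfl⟩ := hg
  obtain ⟨p, hp⟩ := Option.ne_none_iff_exists'.1 (hτg X)
  obtain ⟨q, hq⟩ := Option.ne_none_iff_exists'.1 (hτg Y)
  have hσinj := hσ.injective hσg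
  have hτinj := hτ.injective hτg
  have hαXY : α X ≠ α Y := fun h => hXY (hτinj (by rw [← hα, ← hα, h]))
  refine ⟨α X, α Y, hαXY, mapSet_injective hσg hσinj ?_⟩
  rw [← mapSet_comp, mapSet_congr fun Z _ => hα Z, hτ.mapSet_projLineThrough hτinj hXY hp hq,
    hσ.mapSet_projLineThrough hσinj hαXY ((hα X).trans hp) ((hα Y).trans hq)]

lemma isCollineation_of_comp_eq (hσ : IsProjLinMap σ) (hτ : IsProjLinMap τ)
    (hσg : IsGlobal σ) (hτg : IsGlobal τ) (him : mapSet τ univ = mapSet σ univ)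
    {α : ℙ F V → ℙ F V} (hα : ∀ X, σ (α X) = τ X) : IsCollineation (projLines F V) α := by
  have hbij : Function.Bijective α := by
    refine ⟨fun X Y h => hτ.injective hτg (by rw [← hα, ← hα, h]), fun Y => ?_⟩
    obtain ⟨X, hX, -⟩ := existsUnique_eq_of_mapSet_univ_eq (hτ.injective hτg) hσg him.symm Y
    exact ⟨X, hσ.injective hσg ((hα X).trans hX)⟩
  obtain ⟨β, hβα, hαβ⟩ := Function.bijective_iff_has_inverse.1 hbij
  have hβ : ∀ Y, τ (β Y) = σ Y := fun Y => by rw [← hα, hαβ Y]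
  refine ⟨hbij, fun g => ⟨image_mem_projLines_of_comp_eq hσ hτ hσg hτg hα, fun hg => ?_⟩⟩
  simpa only [image_image, hβα _, image_id'] using
    image_mem_projLines_of_comp_eq hτ hσ hτg hσg hβ hg

end IsProjLinMap

end LinearMaps

end Segre

open Segre Set in
theorem statement_13_general (F : Type*) [Field F] (n m : ℕ)
    (K W : Type*) [Field K] [AddCommGroup W] [Module K W]
    (χ : PGPt F n × PGPt F m → Option (Projectivization K W))
    (hχ : IsLinMap (prodLines (PGLines F n) (PGLines F m)) (projLines K W) χ)
    (B : Fin (m + 1) → PGPt F m) (E : Set (PGPt F n)) (hI : CondI F n m χ B E)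
    (A : PGPt F n) (hII : CondII F n m χ A)
    (γ : PGPt F n × PGPt F m → PGPt F (n * m + n + m))
    (hγ : IsRegularEmbedding F n m γ)
    (φ : PGPt F (n * m + n + m) → Option (Projectivization K W))
    (hφ : IsLinMap (PGLines F (n * m + n + m)) (projLines K W) φ)
    (hext : ∀ (X : PGPt F n) (i : Fin (m + 1)), φ (γ (X, B i)) = χ (X, B i)) :
    mapSet (fun q => φ (γ q)) (({A} : Set (PGPt F n)) ×ˢ (univ : Set (PGPt F m)))
      = mapSet χ (({A} : Set (PGPt F n)) ×ˢ (univ : Set (PGPt F m))) ∧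
    (∀ X : PGPt F m, ∃! Y : PGPt F m, ptImg χ (A, Y) = ptImg φ (γ (A, X))) ∧
    ∀ α' : PGPt F m → PGPt F m,
      (∀ X : PGPt F m, ptImg χ (A, α' X) = ptImg φ (γ (A, X))) →
      IsCollineation (PGLines F m) α' := by
  have hσ : IsProjLinMap fun Y => χ (A, Y) := hχ.isProjLinMap_slice A
  have hτ : IsProjLinMap fun X => φ (γ (A, X)) :=
    hφ.isProjLinMap.comp (hγ.1.isProjLinMap_slice A)
  have hB : spanOf (range B) = ⊤ := by rw [spanOf, iSup_range, hI.1.2]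
  have hspan : spanOf (mapSet (fun X => φ (γ (A, X))) univ)
      = spanOf (mapSet (fun Y => χ (A, Y)) univ) := by
    rw [hτ.spanOf_mapSet_univ hB, hσ.spanOf_mapSet_univ hB]
    congr 1
    exact mapSet_congr (by rintro _ ⟨i, rfl⟩; exact hext A i)
  have hrank : Module.rank K (spanOf (mapSet (fun Y => χ (A, Y)) univ))
      = Module.finrank F (Fin (m + 1) → F) := by
    rw [← mapSet_singleton_prod, hII, Module.finrank_fin_fun, Nat.cast_succ]
  have hσg := hσ.isGlobal_of_rank_eq hrank
  have hτg := hτ.isGlobal_of_rank_eq (hspan ▸ hrank)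
  have him : mapSet (fun X => φ (γ (A, X))) univ = mapSet (fun Y => χ (A, Y)) univ := by
    rw [hτ.mapSet_univ_eq_of_isGlobal hτg, hσ.mapSet_univ_eq_of_isGlobal hσg, hspan]
  refine ⟨by rw [mapSet_singleton_prod, mapSet_singleton_prod, him], fun X => ?_,
    fun α' hα' => hσ.isCollineation_of_comp_eq hτ hσg hτg him fun X => ?_⟩
  · simpa only [ptImg_eq_ptImg_iff] using
      existsUnique_eq_of_mapSet_univ_eq (hσ.injective hσg) hτg him X
  · exact ptImg_eq_ptImg_iff.1 (hα' X)

open Segre Set in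
/-- equations (evert) and (alfa1): `({A} × 𝒫₂)γφ = ({A} × 𝒫₂)χ`,
for every `X ∈ 𝒫₂` there is exactly one `Y ∈ 𝒫₂` with `(A, Y)χ = (A, X)γφ`, and the
resulting map `α' : X ↦ Y` is a collineation of `ℙ₂`. -/
theorem statement_13 (F : Type*) [Field F] (n m : ℕ) (hn : 2 ≤ n) (hm : 1 ≤ m)
    (K W : Type*) [Field K] [AddCommGroup W] [Module K W]
    (χ : PGPt F n × PGPt F m → Option (Projectivization K W))
    (hχ : IsLinMap (prodLines (PGLines F n) (PGLines F m)) (projLines K W) χ)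
    (B : Fin (m + 1) → PGPt F m) (E : Set (PGPt F n)) (hI : CondI F n m χ B E)
    (A : PGPt F n) (hII : CondII F n m χ A)
    (γ : PGPt F n × PGPt F m → PGPt F (n * m + n + m))
    (hγ : IsRegularEmbedding F n m γ)
    (φ : PGPt F (n * m + n + m) → Option (Projectivization K W))
    (hφ : IsLinMap (PGLines F (n * m + n + m)) (projLines K W) φ)
    (hext : ∀ (X : PGPt F n) (i : Fin (m + 1)), φ (γ (X, B i)) = χ (X, B i)) :
    mapSet (fun q => φ (γ q)) (({A} : Set (PGPt F n)) ×ˢ (univ : Set (PGPt F m)))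
      = mapSet χ (({A} : Set (PGPt F n)) ×ˢ (univ : Set (PGPt F m))) ∧
    (∀ X : PGPt F m, ∃! Y : PGPt F m, ptImg χ (A, Y) = ptImg φ (γ (A, X))) ∧
    ∀ α' : PGPt F m → PGPt F m,
      (∀ X : PGPt F m, ptImg χ (A, α' X) = ptImg φ (γ (A, X))) →
      IsCollineation (PGLines F m) α' :=
  statement_13_general F n m K W χ hχ B E hI A hII γ hγ φ hφ hext
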